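/- arXiv:2204.00526 — 5 statements merged into one kernel-verified Lean document; each statement's English description precedes it below -/
import Mathlib

section
/- For any real z > 1 and integer w ≥ 2, (z^w - 1)^2 - w · z^(w-1) · (z - 1)^2 > 0. -/
/-!
Write `S = 1 + z + ⋯ + z^(w-1)`, so that `z^w - 1 = S (z - 1)` and it suffices to show
`w z^(w-1) < S²`. Expanding `S² = ∑ᵢ zⁱ S`, the `i`-th row contains the term `zⁱ z^(w-1-i) = z^(w-1)`
together with at least one further positive term, since `w ≥ 2`.
-/

open Finset

section GeomSum

variable {R : Type*} [CommRing R] [LinearOrder R] [IsStrictOrderedRing R]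

lemma pow_lt_geom_sum {x : R} (hx : 0 < x) {n k : ℕ} (hn : 2 ≤ n) (hk : k < n) :
    x ^ k < ∑ j ∈ range n, x ^ j := by
  obtain ⟨j, hjk, hj⟩ : ∃ j, j ≠ k ∧ j < n := by
    rcases k with _ | k
    · exact ⟨1, one_ne_zero, hn⟩
    · exact ⟨0, (Nat.succ_ne_zero k).symm, by omega⟩
  exact single_lt_sum hjk (mem_range.2 hk) (mem_range.2 hj) (pow_pos hx j)
    fun i _ _ ↦ (pow_pos hx i).le

lemma natCast_mul_pow_pred_lt_geom_sum_sq {x : R} (hx : 0 < x) {n : ℕ} (hn : 2 ≤ n) :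
    n * x ^ (n - 1) < (∑ i ∈ range n, x ^ i) ^ 2 := by
  set S := ∑ i ∈ range n, x ^ i
  have row : ∀ i ∈ range n, x ^ (n - 1) < x ^ i * S := by
    intro i hi
    have hi : i < n := mem_range.1 hi
    calc x ^ (n - 1) = x ^ i * x ^ (n - 1 - i) := by rw [← pow_add, Nat.add_sub_cancel' (by omega)]
      _ < x ^ i * S := mul_lt_mul_of_pos_left (pow_lt_geom_sum hx hn (by omega)) (pow_pos hx i)
  calc n * x ^ (n - 1) = ∑ _i ∈ range n, x ^ (n - 1) := by simp
    _ < ∑ i ∈ range n, x ^ i * S := sum_lt_sum_of_nonempty (nonempty_range_iff.2 (by omega)) row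
    _ = S ^ 2 := by rw [← sum_mul, sq]

end GeomSum

theorem stmt_1 (z : ℝ) (hz : 1 < z) (w : ℕ) (hw : 2 ≤ w) :
    (z ^ w - 1) ^ 2 - (w : ℝ) * z ^ (w - 1) * (z - 1) ^ 2 > 0 := by
  have hS := natCast_mul_pow_pred_lt_geom_sum_sq (zero_lt_one.trans hz) hw
  have hz1 : 0 < (z - 1) ^ 2 := pow_pos (sub_pos.2 hz) 2
  rw [← geom_sum_mul, mul_pow, gt_iff_lt, sub_pos]
  exact mul_lt_mul_of_pos_right hS hz1
end

section
/- Let d ≥ 2 be an integer, ε > 0, N > 0, and w ≥ 2 an integer. Define V(ε, n) = (d - 2 + e^ε) / (n · (e^ε - 1)^2). Then V(ε/w, N) > V(ε, N/w), i.e., (d - 2 + e^(ε/w)) / (N (e^(ε/w) - 1)^2) > w · (d - 2 + e^ε) / (N (e^ε - 1)^2). -/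
/-! With `a = exp (ε / w)` and `S = 1 + a + ⋯ + a ^ (w - 1)` we have `a ^ w - 1 = S (a - 1)`, so after
clearing denominators the claim reads `w (c + a ^ w) < (c + a) S ²` with `c = d - 2 ≥ 0`.
Pairing `a ^ i` with `a ^ (w - 1 - i)` and applying AM-GM gives `S ² ≥ w ² a ^ (w - 1)`, hence
`(c + a) S ² ≥ w ² (c a ^ (w - 1) + a ^ w) ≥ w ² (c + a ^ w)`, and `w ² > w` makes it strict. -/

open Finset Real

lemma two_mul_le_add_of_mul_eq_sq {x y z : ℝ} (hx : 0 ≤ x) (hy : 0 ≤ y)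
    (hxy : x * y = z ^ 2) : 2 * z ≤ x + y := by
  nlinarith [sq_nonneg (x - y)]

lemma sq_mul_pow_le_sq_geom_sum {a : ℝ} (ha : 0 ≤ a) (n : ℕ) :
    (n : ℝ) ^ 2 * a ^ (n - 1) ≤ (∑ i ∈ range n, a ^ i) ^ 2 := by
  set b := √(a ^ (n - 1))
  have hb : b ^ 2 = a ^ (n - 1) := sq_sqrt (by positivity)
  have hpair : ∀ i ∈ range n, 2 * b ≤ a ^ i + a ^ (n - 1 - i) := fun i hi => by
    refine two_mul_le_add_of_mul_eq_sq (by positivity) (by positivity) ?_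
    rw [hb, ← pow_add]
    congr 1
    have := mem_range.mp hi
    omega
  have hsum : ∑ _i ∈ range n, 2 * b ≤ 2 * ∑ i ∈ range n, a ^ i := by
    have := sum_le_sum hpair
    rwa [sum_add_distrib, sum_range_reflect (fun i => a ^ i) n, ← two_mul] at this
  rw [sum_const, card_range, nsmul_eq_mul] at hsum
  calc (n : ℝ) ^ 2 * a ^ (n - 1) = (n * b) ^ 2 := by rw [mul_pow, hb]
    _ ≤ _ := pow_le_pow_left₀ (by positivity) (by linarith) 2

lemma mul_add_pow_lt_add_mul_sq_geom_sum {a c : ℝ} (ha : 1 ≤ a) (hc : 0 ≤ c) {w : ℕ}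
    (hw : 2 ≤ w) : w * (c + a ^ w) < (c + a) * (∑ i ∈ range w, a ^ i) ^ 2 := by
  have hS := sq_mul_pow_le_sq_geom_sum (by linarith : 0 ≤ a) w
  have hpow : 1 ≤ a ^ (w - 1) := one_le_pow₀ ha
  have hsucc : a * a ^ (w - 1) = a ^ w := by rw [← pow_succ', Nat.sub_add_cancel (by omega)]
  have hw' : (2 : ℝ) ≤ w := by exact_mod_cast hw
  calc (w : ℝ) * (c + a ^ w) < w ^ 2 * (c + a ^ w) := by gcongr; nlinarith
    _ ≤ w ^ 2 * (c * a ^ (w - 1) + a * a ^ (w - 1)) := by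
      rw [hsucc]; gcongr; exact le_mul_of_one_le_right hc hpow
    _ = (c + a) * (w ^ 2 * a ^ (w - 1)) := by ring
    _ ≤ _ := by gcongr

lemma mul_div_sub_one_sq_lt {a c : ℝ} (ha : 1 < a) (hc : 0 ≤ c) {w : ℕ} (hw : 2 ≤ w) :
    w * (c + a ^ w) / (a ^ w - 1) ^ 2 < (c + a) / (a - 1) ^ 2 := by
  have hgeom : a ^ w - 1 = (∑ i ∈ range w, a ^ i) * (a - 1) := (geom_sum_mul a w).symm
  have hS : 0 < ∑ i ∈ range w, a ^ i :=
    sum_pos (fun i _ => by positivity) (nonempty_range_iff.mpr (by omega))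
  rw [hgeom, div_lt_div_iff₀ (by positivity) (by positivity), mul_pow, ← mul_assoc]
  exact mul_lt_mul_of_pos_right (mul_add_pow_lt_add_mul_sq_geom_sum ha.le hc hw) (by positivity)

theorem stmt_4 (d : ℕ) (hd : 2 ≤ d) (ε N : ℝ) (hε : 0 < ε) (hN : 0 < N)
    (w : ℕ) (hw : 2 ≤ w) :
    ((d : ℝ) - 2 + Real.exp (ε / w)) / (N * (Real.exp (ε / w) - 1) ^ 2) >
      (w : ℝ) * ((d : ℝ) - 2 + Real.exp ε) / (N * (Real.exp ε - 1) ^ 2) := by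
  have hc : (0 : ℝ) ≤ d - 2 := by
    have : (2 : ℝ) ≤ d := by exact_mod_cast hd
    linarith
  have ha : 1 < exp (ε / w) := one_lt_exp_iff.mpr (by positivity)
  have haw : exp (ε / w) ^ w = exp ε := by
    rw [← exp_nat_mul, mul_div_cancel₀ _ (by positivity)]
  rw [gt_iff_lt, div_mul_eq_div_div_swap, div_mul_eq_div_div_swap, ← haw]
  exact div_lt_div_of_pos_right (mul_div_sub_one_sq_lt ha hc hw) hN
end

section
/- Let w ≥ 1 and suppose ε_1, ε_2, ... is a sequence of nonnegative reals satisfying: ε_t ≤ (ε/2 - Σ_{k=t-w+1}^{t-1} ε_k)/2 for every t (with ε_k = 0 for k ≤ 0). Then for every t ≥ 1, Σ_{k=t-w+1}^{t} ε_k ≤ ε/2. -/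
/-!
The window sum up to `t` is the window sum over the `w - 1` steps before `t` plus `e t`; the
allocation rule bounds this by the average of `ε / 2` and that shorter sum. The shorter sum is
part of the window ending at `t - 1`, so by induction it is at most `ε / 2`, and hence so is the
average.
-/

open Finset

section WindowSums

variable {M : Type*} [AddCommMonoid M] [PartialOrder M] [IsOrderedAddMonoid M]

theorem Int.sum_Icc_le_sum_Icc_sub_one_add {f : ℤ → M} (hf : ∀ k, 0 ≤ f k) (a t : ℤ) :
    ∑ k ∈ Icc a t, f k ≤ ∑ k ∈ Icc a (t - 1), f k + f t := by
  have hsub : Icc a t ⊆ insert t (Icc a (t - 1)) := by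
    intro k; simp only [mem_Icc, mem_insert]; omega
  calc ∑ k ∈ Icc a t, f k ≤ ∑ k ∈ insert t (Icc a (t - 1)), f k :=
        sum_le_sum_of_subset_of_nonneg hsub fun k _ _ ↦ hf k
    _ = ∑ k ∈ Icc a (t - 1), f k + f t := by
        rw [sum_insert (by simp), add_comm]

theorem Int.sum_Icc_le_sum_Icc_of_le_left {f : ℤ → M} (hf : ∀ k, 0 ≤ f k) {a b : ℤ}
    (hab : a ≤ b) (t : ℤ) : ∑ k ∈ Icc b t, f k ≤ ∑ k ∈ Icc a t, f k :=
  sum_le_sum_of_subset_of_nonneg (Icc_subset_Icc_left hab) fun k _ _ ↦ hf k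

end WindowSums

theorem window_sum_le_of_halving_alloc {𝕜 : Type*} [Field 𝕜] [LinearOrder 𝕜]
    [IsStrictOrderedRing 𝕜] (w : ℕ) (B : 𝕜) {e : ℤ → 𝕜} (he : ∀ k, 0 ≤ e k) (t : ℤ)
    (halloc : e t ≤ (B - ∑ k ∈ Icc (t - w + 1) (t - 1), e k) / 2)
    (hprev : ∑ k ∈ Icc (t - 1 - w + 1) (t - 1), e k ≤ B) :
    ∑ k ∈ Icc (t - w + 1) t, e k ≤ B := by
  have hrest : ∑ k ∈ Icc (t - w + 1) (t - 1), e k ≤ B :=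
    (Int.sum_Icc_le_sum_Icc_of_le_left he (by omega) _).trans hprev
  have hsplit := Int.sum_Icc_le_sum_Icc_sub_one_add he (t - w + 1) t
  linarith

theorem stmt_8_general (w : ℕ) (ε : ℝ) (e : ℤ → ℝ)
    (hnonneg : ∀ t, 0 ≤ e t)
    (hzero : ∀ t : ℤ, t ≤ 0 → e t = 0)
    (halloc : ∀ t : ℤ, 1 ≤ t →
      e t ≤ (ε / 2 - ∑ k ∈ Finset.Icc (t - w + 1) (t - 1), e k) / 2) :
    ∀ t : ℤ, 1 ≤ t → ∑ k ∈ Finset.Icc (t - w + 1) t, e k ≤ ε / 2 := by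
  have hvanish : ∀ a b : ℤ, b ≤ 0 → ∑ k ∈ Icc a b, e k = 0 := fun a b hb ↦
    sum_eq_zero fun k hk ↦ hzero k ((mem_Icc.mp hk).2.trans hb)
  have hε : 0 ≤ ε / 2 := by
    have h1 := halloc 1 le_rfl
    rw [hvanish _ _ (by norm_num)] at h1
    linarith [hnonneg 1]
  have hall : ∀ t : ℤ, 0 ≤ t → ∑ k ∈ Icc (t - w + 1) t, e k ≤ ε / 2 := by
    refine Int.leInduction (by rw [hvanish _ _ le_rfl]; exact hε) fun t ht ih ↦ ?_
    refine window_sum_le_of_halving_alloc w _ hnonneg (t + 1) (halloc _ (by omega)) ?_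
    simpa using ih
  exact fun t ht ↦ hall t (by omega)

/-- Budget-accounting invariant of LBD: if at each timestamp the allocated budget is at
most half of the remaining publication budget in the current window of size `w`, then
the sliding-window sum of allocated budgets never exceeds `ε/2`. -/
theorem stmt_8 (w : ℕ) (hw : 1 ≤ w) (ε : ℝ) (e : ℤ → ℝ)
    (hnonneg : ∀ t, 0 ≤ e t)
    (hzero : ∀ t : ℤ, t ≤ 0 → e t = 0)
    (halloc : ∀ t : ℤ, 1 ≤ t →
      e t ≤ (ε / 2 - ∑ k ∈ Finset.Icc (t - w + 1) (t - 1), e k) / 2) :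
    ∀ t : ℤ, 1 ≤ t → ∑ k ∈ Finset.Icc (t - w + 1) t, e k ≤ ε / 2 :=
  stmt_8_general w ε e hnonneg hzero halloc
end

section
/- Let V(ε, n) = (d - 2 + e^ε)/(n(e^ε - 1)^2) for d ≥ 2, ε > 0, n > 0. Then for any integer m ≥ 1, N > 0, V(ε, N/2^(m+1)) < V(ε/2^(m+1), N). -/
set_option maxHeartbeats 800000

private lemma c_double (s : ℝ) :
    Real.exp (2*s) + Real.exp (-(2*s)) - 2
      = (Real.exp s + Real.exp (-s) - 2) * ((Real.exp s + Real.exp (-s) - 2) + 4) := by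
  have h1 : Real.exp (2*s) = Real.exp s * Real.exp s := by
    rw [← Real.exp_add]; ring_nf
  have h2 : Real.exp (-(2*s)) = Real.exp (-s) * Real.exp (-s) := by
    rw [← Real.exp_add]; ring_nf
  have h3 : Real.exp s * Real.exp (-s) = 1 := by
    rw [← Real.exp_add]; simp
  nlinarith [h1, h2, h3]

private lemma c_nonneg (s : ℝ) : 0 ≤ Real.exp s + Real.exp (-s) - 2 := by
  have h3 : Real.exp s * Real.exp (-s) = 1 := by rw [← Real.exp_add]; simp
  nlinarith [mul_nonneg (sq_nonneg (Real.exp s - 1)) (Real.exp_pos (-s)).le, h3]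

private lemma c_pow (t : ℝ) : ∀ k : ℕ,
    (4:ℝ)^k * (Real.exp t + Real.exp (-t) - 2)
      ≤ Real.exp (2^k * t) + Real.exp (-(2^k * t)) - 2 := by
  intro k
  induction k with
  | zero => simp
  | succ k ih =>
    have h2 : (2:ℝ)^(k+1) * t = 2 * (2^k * t) := by ring
    rw [h2, c_double (2^k * t), pow_succ]
    have hc := c_nonneg (2^k * t)
    have hct := c_nonneg t
    nlinarith [ih, hc, hct, pow_nonneg (by norm_num : (0:ℝ) ≤ 4) k,
      sq_nonneg (Real.exp (2^k * t) + Real.exp (-(2^k * t)) - 2)]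

/-- Population division beats budget division for the m-th publication:
`V(ε, N/2^(m+1)) < V(ε/2^(m+1), N)` where `V(ε,n) = (d-2+e^ε)/(n(e^ε-1)^2)`. -/
theorem stmt_12 (d : ℕ) (hd : 2 ≤ d) (ε N : ℝ) (hε : 0 < ε) (hN : 0 < N)
    (m : ℕ) (hm : 1 ≤ m) :
    ((d : ℝ) - 2 + Real.exp ε) / ((N / 2 ^ (m + 1)) * (Real.exp ε - 1) ^ 2) <
      ((d : ℝ) - 2 + Real.exp (ε / 2 ^ (m + 1))) /
        (N * (Real.exp (ε / 2 ^ (m + 1)) - 1) ^ 2) := by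
  set k := m + 1 with hk
  set t : ℝ := ε / 2 ^ k with htdef
  have h2k : (0:ℝ) < 2 ^ k := by positivity
  have ht : 0 < t := by positivity
  have hεt : ε = 2 ^ k * t := by
    rw [htdef, mul_div_assoc', mul_comm, mul_div_assoc, div_self (ne_of_gt h2k), mul_one]
  set a := Real.exp ε with ha
  set b := Real.exp t with hb
  set r := Real.exp (ε - t) with hr
  have hab : a = r * b := by rw [ha, hb, hr, ← Real.exp_add]; ring_nf
  have hr1 : 1 ≤ r := by
    rw [hr, ← Real.exp_zero]
    apply Real.exp_le_exp.mpr
    have h1k : (1:ℝ) ≤ 2^k := one_le_pow₀ (by norm_num)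
    nlinarith [h1k, ht, hεt]
  have hb1 : 1 < b := by
    rw [hb, ← Real.exp_zero]; exact Real.exp_lt_exp.mpr ht
  have ha1 : 1 < a := by
    rw [ha, ← Real.exp_zero]; exact Real.exp_lt_exp.mpr hε
  have hbpos : (0:ℝ) < b := Real.exp_pos t
  have hapos : (0:ℝ) < a := Real.exp_pos ε
  have hd2 : (0:ℝ) ≤ (d:ℝ) - 2 := by
    have : (2:ℝ) ≤ d := by exact_mod_cast hd
    linarith
  set A := (d:ℝ) - 2 + a with hA
  set B := (d:ℝ) - 2 + b with hB
  have hBpos : 0 < B := by rw [hB]; linarith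
  have hApos : 0 < A := by rw [hA]; linarith
  -- c relations
  have hainv : a * Real.exp (-ε) = 1 := by rw [ha, ← Real.exp_add]; simp
  have hbinv : b * Real.exp (-t) = 1 := by rw [hb, ← Real.exp_add]; simp
  have hca : (a - 1)^2 = (Real.exp ε + Real.exp (-ε) - 2) * a := by
    rw [← ha]; nlinarith [hainv]
  have hcb : (b - 1)^2 = (Real.exp t + Real.exp (-t) - 2) * b := by
    rw [← hb]; nlinarith [hbinv]
  have hcpow : (4:ℝ)^k * (Real.exp t + Real.exp (-t) - 2)
      ≤ Real.exp ε + Real.exp (-ε) - 2 := by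
    rw [hεt]; exact c_pow t k
  -- main inequality: 2^k * A * (b-1)^2 < B * (a-1)^2
  have hct : 0 ≤ Real.exp t + Real.exp (-t) - 2 := c_nonneg t
  have hctpos : 0 < Real.exp t + Real.exp (-t) - 2 := by
    nlinarith [hcb, sq_nonneg (b-1), hbpos, hb1]
  have hAB : A ≤ r * B := by
    rw [hA, hB]
    nlinarith [hab, hr1, hd2]
  have hn4 : (2:ℝ)^k < 4^k := by
    apply pow_lt_pow_left₀ (by norm_num) (by norm_num)
    omega
  have hbr : (b - 1)^2 * r = (Real.exp t + Real.exp (-t) - 2) * a := by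
    rw [hcb, hab]; ring
  have main : 2^k * A * (b-1)^2 < B * (a-1)^2 := by
    have hbsq : 0 < (b-1)^2 := pow_pos (by linarith) 2
    have hrpos : (0:ℝ) < r := Real.exp_pos _
    have step1 : 2^k * A * (b-1)^2 ≤ 2^k * (r*B) * (b-1)^2 :=
      mul_le_mul_of_nonneg_right (mul_le_mul_of_nonneg_left hAB h2k.le) hbsq.le
    have step2 : 2^k * (r*B) * (b-1)^2 < 4^k * (r*B) * (b-1)^2 := by
      have hrB : 0 < r * B * (b-1)^2 := mul_pos (mul_pos hrpos hBpos) hbsq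
      calc 2^k * (r*B) * (b-1)^2 = 2^k * (r * B * (b-1)^2) := by ring
        _ < 4^k * (r * B * (b-1)^2) := mul_lt_mul_of_pos_right hn4 hrB
        _ = 4^k * (r*B) * (b-1)^2 := by ring
    have step3 : 4^k * (r*B) * (b-1)^2 ≤ B * (a-1)^2 := by
      have h1 : 4^k * (r*B) * (b-1)^2 = B * ((4:ℝ)^k * ((Real.exp t + Real.exp (-t) - 2) * a)) := by
        rw [← hbr]; ring
      rw [h1, hca]
      have : (4:ℝ)^k * ((Real.exp t + Real.exp (-t) - 2) * a)
          ≤ (Real.exp ε + Real.exp (-ε) - 2) * a := by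
        nlinarith [hcpow, hapos]
      nlinarith [this, hBpos]
    linarith
  -- convert to division form
  have hasq : (0:ℝ) < (a-1)^2 := pow_pos (by linarith) 2
  have hbsq : (0:ℝ) < (b-1)^2 := pow_pos (by linarith) 2
  have hNk : 0 < N / 2^k := by positivity
  rw [div_lt_div_iff₀ (mul_pos hNk hasq) (mul_pos hN hbsq)]
  have hNN : N / 2^k * 2^k = N := div_mul_cancel₀ N (ne_of_gt h2k)
  calc A * (N * (b-1)^2) = (N / 2^k) * (2^k * A * (b-1)^2) := by
        rw [show (N / 2^k) * (2^k * A * (b-1)^2) = (N / 2^k * 2^k) * (A * (b-1)^2) by ring,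
          hNN]; ring
    _ < (N / 2^k) * (B * (a-1)^2) := mul_lt_mul_of_pos_left main hNk
    _ = B * (N / 2^k * (a-1)^2) := by ring
end

section
/- More generally: let V(ε, n) = (d - 2 + e^ε)/(n(e^ε - 1)^2) with d ≥ 2. For any ε > 0, N > 0, and real g > 1, V(ε, N/g) < V(ε/g, N), i.e., g·(d-2+e^ε)/(e^ε-1)^2 < (d-2+e^(ε/g))/(e^(ε/g)-1)^2. -/
open Real

lemma sinh_strictConvexOn : StrictConvexOn ℝ (Set.Ici 0) Real.sinh := by
  apply strictConvexOn_of_deriv2_pos (convex_Ici 0) Real.continuous_sinh.continuousOn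
  intro x hx
  rw [interior_Ici] at hx
  have : deriv^[2] Real.sinh = Real.sinh := by
    ext y
    simp [Function.iterate_succ, Real.deriv_sinh, Real.deriv_cosh]
  rw [this]
  exact Real.sinh_pos_iff.2 hx

lemma sinh_mul_lt {x g : ℝ} (hx : 0 < x) (hg : 1 < g) :
    g * Real.sinh x < Real.sinh (g * x) := by
  have hg0 : 0 < g := by linarith
  have h := sinh_strictConvexOn.2 (show g * x ∈ Set.Ici (0:ℝ) by simp; positivity)
    (show (0:ℝ) ∈ Set.Ici (0:ℝ) from Set.mem_Ici.2 le_rfl) (by positivity)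
    (show (0:ℝ) < 1 / g by positivity)
    (show (0:ℝ) < 1 - 1 / g by rw [sub_pos, div_lt_one hg0]; exact hg) (by ring)
  simp only [smul_eq_mul, mul_zero, Real.sinh_zero] at h
  have hx' : 1 / g * (g * x) + 0 = x := by
    rw [add_zero]; field_simp
  rw [hx'] at h
  have : Real.sinh x < 1 / g * Real.sinh (g * x) := by linarith
  calc g * Real.sinh x < g * (1 / g * Real.sinh (g * x)) := by
        exact (mul_lt_mul_iff_right₀ hg0).2 this
    _ = Real.sinh (g * x) := by field_simp


set_option maxHeartbeats 1000000 in
/-- For any real division factor `g > 1`, splitting the population while keeping the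
full budget beats splitting the budget while keeping the full population:
`V(ε, N/g) < V(ε/g, N)`, i.e.
`g·(d-2+e^ε)/(e^ε-1)^2 < (d-2+e^(ε/g))/(e^(ε/g)-1)^2`. -/
theorem stmt_13 (d : ℕ) (hd : 2 ≤ d) (ε N g : ℝ) (hε : 0 < ε) (hN : 0 < N)
    (hg : 1 < g) :
    ((d : ℝ) - 2 + Real.exp ε) / ((N / g) * (Real.exp ε - 1) ^ 2) <
      ((d : ℝ) - 2 + Real.exp (ε / g)) / (N * (Real.exp (ε / g) - 1) ^ 2) := by
  have hg0 : (0:ℝ) < g := lt_trans one_pos hg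
  set c : ℝ := (d : ℝ) - 2 with hcdef
  have hc : 0 ≤ c := by
    have : (2:ℝ) ≤ (d:ℝ) := by exact_mod_cast hd
    simp [hcdef]; linarith
  have hu : 0 < ε / (2*g) := by positivity
  set S' := Real.sinh (ε/(2*g)) with hS'def
  set S := Real.sinh (ε/2) with hSdef
  have hkey : g * S' < S := by
    have h := sinh_mul_lt hu hg
    have h2 : g * (ε/(2*g)) = ε/2 := by field_simp
    rwa [h2] at h
  have hS' : 0 < S' := Real.sinh_pos_iff.2 hu
  have hS : 0 < S := by nlinarith
  set A := Real.exp (ε/(2*g)) with hAdef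
  set B := Real.exp (ε/2) with hBdef
  have hApos : (0:ℝ) < A := Real.exp_pos _
  have hBpos : (0:ℝ) < B := Real.exp_pos _
  have hAB : A ≤ B := by
    apply Real.exp_le_exp.2
    rw [div_le_div_iff₀ (by positivity) (by norm_num)]
    nlinarith
  have hB2 : Real.exp ε = B^2 := by
    rw [hBdef, sq, ← Real.exp_add]; ring_nf
  have hA2 : Real.exp (ε/g) = A^2 := by
    rw [hAdef, sq, ← Real.exp_add]; congr 1; field_simp; ring
  have hBinv : B * Real.exp (-(ε/2)) = 1 := by rw [← Real.exp_add]; simp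
  have hAinv : A * Real.exp (-(ε/(2*g))) = 1 := by rw [← Real.exp_add]; simp
  have e1 : Real.exp ε - 1 = 2*B*S := by
    have h : S = (B - Real.exp (-(ε/2)))/2 := by rw [hSdef, Real.sinh_eq, hBdef]
    rw [h, hB2]
    linear_combination hBinv
  have e2 : Real.exp (ε/g) - 1 = 2*A*S' := by
    have h : S' = (A - Real.exp (-(ε/(2*g))))/2 := by rw [hS'def, Real.sinh_eq, hAdef]
    rw [h, hA2]
    linear_combination hAinv
  clear_value S S' A B
  have hSS : g^2 * S'^2 < S^2 := by
    have h := mul_pos (sub_pos.2 hkey) (show (0:ℝ) < S + g * S' by positivity)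
    nlinarith [h]
  have hA2B2 : (0:ℝ) < A^2*B^2 := by positivity
  have hgg : 0 < g^2 - g := by nlinarith
  have t2 : g * (A^2*B^2*S'^2) < A^2*B^2*S^2 := by
    have h1 : A^2*B^2*(g^2*S'^2) < A^2*B^2*S^2 := mul_lt_mul_of_pos_left hSS hA2B2
    have h2 : 0 < (g^2 - g) * (A^2*B^2*S'^2) := mul_pos hgg (by positivity)
    nlinarith [h1, h2]
  have t1 : c * (g * (A^2 * S'^2)) ≤ c * (B^2 * S^2) := by
    apply mul_le_mul_of_nonneg_left _ hc
    have hAB2 : A^2 ≤ B^2 := by nlinarith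
    have h1 : A^2*(g^2*S'^2) ≤ A^2*S^2 := mul_le_mul_of_nonneg_left hSS.le (sq_nonneg A)
    have h2 : A^2*S^2 ≤ B^2*S^2 := mul_le_mul_of_nonneg_right hAB2 (sq_nonneg S)
    have h3 : 0 ≤ (g^2 - g) * (A^2*S'^2) := le_of_lt (mul_pos hgg (by positivity))
    nlinarith [h1, h2, h3]
  have main : g * ((c + B^2) * (2*A*S')^2) < (c + A^2) * (2*B*S)^2 := by
    nlinarith [t1, t2]
  have hNg : 0 < N / g := by positivity
  have hden1 : 0 < (N / g) * (Real.exp ε - 1)^2 := by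
    rw [e1]; positivity
  have hden2 : 0 < N * (Real.exp (ε/g) - 1)^2 := by
    rw [e2]; positivity
  rw [div_lt_div_iff₀ hden1 hden2, e1, e2, hB2, hA2]
  calc (c + B^2) * (N * (2*A*S')^2)
      = (N/g) * (g * ((c + B^2) * (2*A*S')^2)) := by field_simp
    _ < (N/g) * ((c + A^2) * (2*B*S)^2) := mul_lt_mul_of_pos_left main hNg
    _ = (c + A^2) * (N/g * (2*B*S)^2) := by ring
end
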